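/- Let X be a nonnegative random variable whose Laplace transform satisfies E[e^{-u X}] = e^{-T φ(u)} for all u > 0, where T > 0 and φ : (0,∞) → [0,∞) is measurable. Then for every t > 0, P(X ≥ t) ≤ 2 ∫₀^∞ (1 - e^{-T φ(u/t)}) e^{-u} du ≤ 2T ∫₀^∞ φ(u/t) e^{-u} du. -/

import Mathlib

open MeasureTheory Set Real
open scoped ENNReal

/-!
On `{t ≤ X}` we have `1 ≤ 2 X / (X + t)`, so `P(X ≥ t) ≤ 2 E[X / (X + t)]`. Writing
`x / (x + t) = ∫₀^∞ (1 - e^{-u x / t}) e^{-u} du` and exchanging the integrals (Tonelli) turns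
`E[X / (X + t)]` into `∫₀^∞ (1 - E[e^{-(u/t) X}]) e^{-u} du`, where the Laplace transform can be
substituted. The second bound is `1 - e^{-y} ≤ y` under the integral.
-/

lemma one_le_two_mul_div_add {x t : ℝ} (ht : 0 < t) (htx : t ≤ x) :
    1 ≤ 2 * (x / (x + t)) := by
  rw [mul_div_assoc', le_div_iff₀ (by linarith)]
  linarith

lemma meas_ge_le_two_mul_lintegral_div_add {α : Type*} [MeasurableSpace α] (μ : Measure α)
    {X : α → ℝ} (hX : Measurable X) {t : ℝ} (ht : 0 < t) :
    μ {ω | t ≤ X ω} ≤ 2 * ∫⁻ ω, ENNReal.ofReal (X ω / (X ω + t)) ∂μ := by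
  rw [← lintegral_const_mul' _ _ ENNReal.ofNat_ne_top]
  refine meas_le_lintegral₀ (by fun_prop) fun ω (hω : t ≤ X ω) => ?_
  rw [← ENNReal.ofReal_ofNat, ← ENNReal.ofReal_mul zero_le_two]
  exact ENNReal.one_le_ofReal.2 (one_le_two_mul_div_add ht hω)

lemma one_sub_exp_neg_mul_nonneg {s x : ℝ} (hs : 0 ≤ s) (hx : 0 ≤ x) :
    0 ≤ 1 - exp (-s * x) := by
  rw [sub_nonneg, exp_le_one_iff, neg_mul, neg_nonpos]
  exact mul_nonneg hs hx

lemma one_sub_exp_neg_div_mul_mul_exp_neg (t x u : ℝ) :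
    (1 - exp (-(u / t) * x)) * exp (-u) = exp (-1 * u) - exp (-(1 + x / t) * u) := by
  rw [sub_mul, one_mul, ← exp_add]
  ring_nf

lemma integral_Ioi_one_sub_exp_neg_div_mul_mul_exp_neg {t x : ℝ} (ht : 0 < t) (hx : 0 ≤ x) :
    ∫ u in Ioi (0 : ℝ), (1 - exp (-(u / t) * x)) * exp (-u) = x / (x + t) := by
  have ha : -(1 + x / t) < 0 := neg_lt_zero.2 (by positivity)
  simp_rw [one_sub_exp_neg_div_mul_mul_exp_neg]
  rw [integral_sub (integrableOn_exp_mul_Ioi (by norm_num) 0) (integrableOn_exp_mul_Ioi ha 0),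
    integral_exp_mul_Ioi (by norm_num), integral_exp_mul_Ioi ha]
  simp only [mul_zero, exp_zero]
  field_simp
  ring

lemma lintegral_Ioi_one_sub_exp_neg_div_mul_mul_exp_neg {t x : ℝ} (ht : 0 < t) (hx : 0 ≤ x) :
    ∫⁻ u in Ioi (0 : ℝ), ENNReal.ofReal ((1 - exp (-(u / t) * x)) * exp (-u))
      = ENNReal.ofReal (x / (x + t)) := by
  have hint : IntegrableOn (fun u => (1 - exp (-(u / t) * x)) * exp (-u)) (Ioi 0) := by
    simp_rw [one_sub_exp_neg_div_mul_mul_exp_neg]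
    exact (integrableOn_exp_mul_Ioi (by norm_num) 0).sub
      (integrableOn_exp_mul_Ioi (neg_lt_zero.2 (by positivity)) 0)
  have hnonneg : ∀ u ∈ Ioi (0 : ℝ), 0 ≤ (1 - exp (-(u / t) * x)) * exp (-u) := fun u hu =>
    mul_nonneg (one_sub_exp_neg_mul_nonneg (div_pos hu ht).le hx) (exp_pos _).le
  rw [← integral_Ioi_one_sub_exp_neg_div_mul_mul_exp_neg ht hx,
    ofReal_integral_eq_lintegral_ofReal hint (ae_restrict_of_forall_mem measurableSet_Ioi hnonneg)]

lemma lintegral_ofReal_one_sub_exp_neg_mul {Ω : Type*} [MeasurableSpace Ω] (P : Measure Ω)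
    [IsProbabilityMeasure P] {X : Ω → ℝ} (hX : Measurable X) (hX0 : ∀ ω, 0 ≤ X ω)
    {s : ℝ} (hs : 0 ≤ s) :
    ∫⁻ ω, ENNReal.ofReal (1 - exp (-s * X ω)) ∂P
      = ENNReal.ofReal (1 - ∫ ω, exp (-s * X ω) ∂P) := by
  have hint : Integrable (fun ω => exp (-s * X ω)) P := by
    refine Integrable.of_bound (by fun_prop) 1 (ae_of_all _ fun ω => ?_)
    rw [norm_of_nonneg (exp_pos _).le]
    linarith [one_sub_exp_neg_mul_nonneg hs (hX0 ω)]
  have hint' : Integrable (fun ω => 1 - exp (-s * X ω)) P := (integrable_const 1).sub hint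
  rw [← ofReal_integral_eq_lintegral_ofReal hint'
    (ae_of_all _ fun ω => one_sub_exp_neg_mul_nonneg hs (hX0 ω)),
    integral_sub (integrable_const 1) hint, integral_const, probReal_univ, one_smul]

lemma lintegral_ofReal_div_add_eq_setLIntegral_laplace {Ω : Type*} [MeasurableSpace Ω]
    (P : Measure Ω) [IsProbabilityMeasure P] {X : Ω → ℝ} (hX : Measurable X)
    (hX0 : ∀ ω, 0 ≤ X ω) {t : ℝ} (ht : 0 < t) :
    ∫⁻ ω, ENNReal.ofReal (X ω / (X ω + t)) ∂P
      = ∫⁻ u in Ioi (0 : ℝ),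
          ENNReal.ofReal ((1 - ∫ ω, exp (-(u / t) * X ω) ∂P) * exp (-u)) := by
  calc ∫⁻ ω, ENNReal.ofReal (X ω / (X ω + t)) ∂P
      = ∫⁻ ω, (∫⁻ u in Ioi (0 : ℝ),
          ENNReal.ofReal ((1 - exp (-(u / t) * X ω)) * exp (-u))) ∂P := by
        simp_rw [lintegral_Ioi_one_sub_exp_neg_div_mul_mul_exp_neg ht (hX0 _)]
    _ = ∫⁻ u in Ioi (0 : ℝ), ∫⁻ ω,
          ENNReal.ofReal ((1 - exp (-(u / t) * X ω)) * exp (-u)) ∂P :=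
        lintegral_lintegral_swap (by fun_prop)
    _ = _ := by
        refine setLIntegral_congr_fun measurableSet_Ioi fun u hu => ?_
        simp_rw [ENNReal.ofReal_mul' (exp_pos (-u)).le]
        rw [lintegral_mul_const' _ _ ENNReal.ofReal_ne_top,
          lintegral_ofReal_one_sub_exp_neg_mul P hX hX0 (div_pos hu ht).le]

lemma lintegral_ofReal_one_sub_exp_mul_le {α : Type*} [MeasurableSpace α] (μ : Measure α)
    {T : ℝ} (hT : 0 ≤ T) (g w : α → ℝ) (hw : ∀ u, 0 ≤ w u) :
    ∫⁻ u, ENNReal.ofReal ((1 - exp (-T * g u)) * w u) ∂μ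
      ≤ ENNReal.ofReal T * ∫⁻ u, ENNReal.ofReal (g u * w u) ∂μ := by
  rw [← lintegral_const_mul' _ _ ENNReal.ofReal_ne_top]
  refine lintegral_mono fun u => ?_
  rw [← ENNReal.ofReal_mul hT, ← mul_assoc]
  have hexp : 1 - exp (-T * g u) ≤ T * g u := by
    rw [neg_mul]
    linarith [one_sub_le_exp_neg (T * g u)]
  exact ENNReal.ofReal_le_ofReal (mul_le_mul_of_nonneg_right hexp (hw u))

theorem tail_bound_via_laplace_general {Ω : Type*} [MeasurableSpace Ω] (P : Measure Ω)
    [IsProbabilityMeasure P] (X : Ω → ℝ) (hX : Measurable X) (hX0 : ∀ ω, 0 ≤ X ω)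
    (T : ℝ) (hT : 0 < T) (φ : ℝ → ℝ)
    (hlap : ∀ u > 0, ∫ ω, Real.exp (-u * X ω) ∂P = Real.exp (-T * φ u)) :
    ∀ t > 0,
      P {ω | t ≤ X ω}
          ≤ 2 * ∫⁻ u in Set.Ioi (0:ℝ),
              ENNReal.ofReal ((1 - Real.exp (-T * φ (u / t))) * Real.exp (-u)) ∧
      2 * (∫⁻ u in Set.Ioi (0:ℝ),
              ENNReal.ofReal ((1 - Real.exp (-T * φ (u / t))) * Real.exp (-u)))
          ≤ ENNReal.ofReal (2 * T) *
              ∫⁻ u in Set.Ioi (0:ℝ), ENNReal.ofReal (φ (u / t) * Real.exp (-u)) := by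
  intro t ht
  have hlaplace : ∫⁻ ω, ENNReal.ofReal (X ω / (X ω + t)) ∂P
      = ∫⁻ u in Ioi (0 : ℝ), ENNReal.ofReal ((1 - exp (-T * φ (u / t))) * exp (-u)) := by
    rw [lintegral_ofReal_div_add_eq_setLIntegral_laplace P hX hX0 ht]
    refine setLIntegral_congr_fun measurableSet_Ioi fun u hu => ?_
    rw [hlap _ (div_pos hu ht)]
  refine ⟨hlaplace ▸ meas_ge_le_two_mul_lintegral_div_add P hX ht, ?_⟩
  calc 2 * ∫⁻ u in Ioi (0 : ℝ), ENNReal.ofReal ((1 - exp (-T * φ (u / t))) * exp (-u))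
      ≤ 2 * (ENNReal.ofReal T * ∫⁻ u in Ioi (0 : ℝ), ENNReal.ofReal (φ (u / t) * exp (-u))) := by
        gcongr
        exact lintegral_ofReal_one_sub_exp_mul_le _ hT.le _ _ fun u => (exp_pos _).le
    _ = ENNReal.ofReal (2 * T) * ∫⁻ u in Ioi (0 : ℝ), ENNReal.ofReal (φ (u / t) * exp (-u)) := by
        rw [ENNReal.ofReal_mul zero_le_two, ENNReal.ofReal_ofNat, mul_assoc]

theorem tail_bound_via_laplace {Ω : Type*} [MeasurableSpace Ω] (P : Measure Ω)
    [IsProbabilityMeasure P] (X : Ω → ℝ) (hX : Measurable X) (hX0 : ∀ ω, 0 ≤ X ω)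
    (T : ℝ) (hT : 0 < T) (φ : ℝ → ℝ) (hφm : Measurable φ) (hφ0 : ∀ u > 0, 0 ≤ φ u)
    (hlap : ∀ u > 0, ∫ ω, Real.exp (-u * X ω) ∂P = Real.exp (-T * φ u)) :
    ∀ t > 0,
      P {ω | t ≤ X ω}
          ≤ 2 * ∫⁻ u in Set.Ioi (0:ℝ),
              ENNReal.ofReal ((1 - Real.exp (-T * φ (u / t))) * Real.exp (-u)) ∧
      2 * (∫⁻ u in Set.Ioi (0:ℝ),
              ENNReal.ofReal ((1 - Real.exp (-T * φ (u / t))) * Real.exp (-u)))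
          ≤ ENNReal.ofReal (2 * T) *
              ∫⁻ u in Set.Ioi (0:ℝ), ENNReal.ofReal (φ (u / t) * Real.exp (-u)) :=
  tail_bound_via_laplace_general P X hX hX0 T hT φ hlap
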